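/- Let A be Hurwitz, 𝓟 = 𝓟ᵀ > 0 solve Aᵀ𝓟 + 𝓟A = −Q with Q > 0. Consider V(X, μ̃) = (1/2)Xᵀ𝓟X + (1/2)⟨μ̃,μ̃⟩_P along solutions of Ẋ = AX + B((𝓗X)∘(Πⁿμ̃) + v + d) with parameter update μ̃' = −((𝓗X)Πⁿ)* Bᵀ𝓟X. Then V̇ = −(1/2)XᵀQX + Xᵀ𝓟B(v + d); i.e., the adaptive term exactly cancels the parameter-error contribution. -/

import Mathlib

open Matrix
open scoped RealInnerProductSpace

/-!
Differentiating `V` gives `Xᵀ𝓟Ẋ + ⟨μ̃', μ̃⟩`, by symmetry of `𝓟`. Substituting the dynamics,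
the Lyapunov equation turns `Xᵀ𝓟AX` into `−(1/2)XᵀQX`, while the update law makes `⟨μ̃', μ̃⟩`
equal to `−(Bᵀ𝓟X)·(𝓗X)(Πⁿμ̃) = −Xᵀ𝓟B(𝓗X)(Πⁿμ̃)`, which cancels the parameter-error term
of `Xᵀ𝓟Ẋ`.
-/

namespace Matrix

variable {ι κ R : Type*} [Fintype ι] [CommRing R]

theorem IsSymm.dotProduct_mulVec_comm {P : Matrix ι ι R} (hP : P.IsSymm) (u w : ι → R) :
    u ⬝ᵥ P *ᵥ w = w ⬝ᵥ P *ᵥ u := by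
  rw [dotProduct_mulVec, ← mulVec_transpose, hP.eq, dotProduct_comm]

theorem IsSymm.dotProduct_mulVec_mulVec [Fintype κ] {P : Matrix ι ι R} (hP : P.IsSymm)
    (B : Matrix ι κ R) (x : ι → R) (y : κ → R) :
    x ⬝ᵥ P *ᵥ (B *ᵥ y) = Bᵀ *ᵥ (P *ᵥ x) ⬝ᵥ y := by
  rw [dotProduct_mulVec, dotProduct_mulVec, ← mulVec_transpose P, ← mulVec_transpose B, hP.eq]

theorem IsSymm.two_mul_dotProduct_mulVec_mulVec_of_lyapunov {A P Q : Matrix ι ι R}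
    (hP : P.IsSymm) (hLyap : Aᵀ * P + P * A = -Q) (x : ι → R) :
    2 * (x ⬝ᵥ P *ᵥ (A *ᵥ x)) = -(x ⬝ᵥ Q *ᵥ x) := by
  have h := congrArg (fun M => x ⬝ᵥ M *ᵥ x) hLyap
  simp only [add_mulVec, dotProduct_add, neg_mulVec, dotProduct_neg, ← mulVec_mulVec] at h
  rw [← h, two_mul, dotProduct_mulVec x Aᵀ, vecMul_transpose, hP.dotProduct_mulVec_comm]

end Matrix

section Calculus

variable {𝕜 ι : Type*} [NontriviallyNormedField 𝕜] [Fintype ι]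
  {x y : 𝕜 → ι → 𝕜} {x' y' : ι → 𝕜} {t : 𝕜}

theorem HasDerivAt.dotProduct (hx : HasDerivAt x x' t) (hy : HasDerivAt y y' t) :
    HasDerivAt (fun s => x s ⬝ᵥ y s) (x' ⬝ᵥ y t + x t ⬝ᵥ y') t := by
  have h := HasDerivAt.fun_sum (u := Finset.univ) fun i _ =>
    (hasDerivAt_pi.mp hx i).mul (hasDerivAt_pi.mp hy i)
  rw [Finset.sum_add_distrib] at h
  exact h

theorem HasDerivAt.mulVec {κ : Type*} (M : Matrix κ ι 𝕜) (hx : HasDerivAt x x' t) :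
    HasDerivAt (fun s => M *ᵥ x s) (M *ᵥ x') t :=
  hasDerivAt_pi.mpr fun i => by
    have h := (hasDerivAt_const t (M i)).dotProduct hx
    rw [zero_dotProduct, zero_add] at h
    exact h

theorem HasDerivAt.dotProduct_mulVec_self {P : Matrix ι ι 𝕜} (hP : P.IsSymm)
    (hx : HasDerivAt x x' t) :
    HasDerivAt (fun s => x s ⬝ᵥ P *ᵥ x s) (2 * (x t ⬝ᵥ P *ᵥ x')) t := by
  convert hx.dotProduct (hx.mulVec P) using 1
  rw [hP.dotProduct_mulVec_comm, two_mul]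

end Calculus

theorem stmt15_general {m q : ℕ} {P : Type*} [NormedAddCommGroup P] [InnerProductSpace ℝ P]
    (A Pm Q : Matrix (Fin m) (Fin m) ℝ) (Bm : Matrix (Fin m) (Fin q) ℝ)
    (hPsymm : Pm.IsSymm)
    (hLyap : A.transpose * Pm + Pm * A = -Q)
    -- `G t = (𝓗X)(t)` acting on parameters, `Pn = Πⁿ` an orthogonal projection
    (G : ℝ → P →L[ℝ] (Fin q → ℝ))
    (Pn : P →L[ℝ] P)
    (X : ℝ → Fin m → ℝ) (mt : ℝ → P) (mtdot : ℝ → P) (v d : ℝ → Fin q → ℝ) (t : ℝ)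
    (hX : HasDerivAt X (A.mulVec (X t) + Bm.mulVec ((G t) (Pn (mt t)) + v t + d t)) t)
    (hmt : HasDerivAt mt (mtdot t) t)
    -- the update law `μ̃' = −((𝓗X)Πⁿ)* Bᵀ𝓟X`, characterized via the adjoint identity
    (hupdate : ∀ p : P,
      ⟪mtdot t, p⟫ = -((Bm.transpose.mulVec (Pm.mulVec (X t))) ⬝ᵥ (G t) (Pn p))) :
    HasDerivAt (fun s => (1 / 2) * (X s ⬝ᵥ Pm.mulVec (X s)) + (1 / 2) * ⟪mt s, mt s⟫)
      (-(1 / 2) * (X t ⬝ᵥ Q.mulVec (X t)) +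
        (X t ⬝ᵥ Pm.mulVec (Bm.mulVec (v t + d t)))) t := by
  refine (((hX.dotProduct_mulVec_self hPsymm).const_mul (1 / 2)).add
    ((hmt.inner ℝ hmt).const_mul (1 / 2))).congr_deriv ?_
  have hLyapX := hPsymm.two_mul_dotProduct_mulVec_mulVec_of_lyapunov hLyap (X t)
  rw [← real_inner_comm (mt t), hupdate, ← hPsymm.dotProduct_mulVec_mulVec, add_assoc]
  simp only [mulVec_add, dotProduct_add]
  linear_combination (1 / 2 : ℝ) * hLyapX

/-- The Lyapunov derivative computation of Theorem 4: with `A` Hurwitz,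
`𝓟 = 𝓟ᵀ > 0` solving `Aᵀ𝓟 + 𝓟A = −Q`, `Q > 0`, along solutions of
`Ẋ = AX + B((𝓗X)∘(Πⁿμ̃) + v + d)` with parameter update
`μ̃' = −((𝓗X)Πⁿ)* Bᵀ𝓟X`, the function `V = (1/2)Xᵀ𝓟X + (1/2)⟨μ̃,μ̃⟩` satisfies
`V̇ = −(1/2)XᵀQX + Xᵀ𝓟B(v + d)`: the adaptive term exactly cancels the
parameter-error contribution. -/
theorem stmt15 {m q : ℕ} {P : Type*} [NormedAddCommGroup P] [InnerProductSpace ℝ P]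
    (A Pm Q : Matrix (Fin m) (Fin m) ℝ) (Bm : Matrix (Fin m) (Fin q) ℝ)
    (hHurwitz : ∀ z ∈ spectrum ℂ (A.map (algebraMap ℝ ℂ)), z.re < 0)
    (hPsymm : Pm.IsSymm) (hPpos : Pm.PosDef) (hQpos : Q.PosDef)
    (hLyap : A.transpose * Pm + Pm * A = -Q)
    -- `G t = (𝓗X)(t)` acting on parameters, `Pn = Πⁿ` an orthogonal projection
    (G : ℝ → P →L[ℝ] (Fin q → ℝ))
    (Pn : P →L[ℝ] P) (hPn : Pn.comp Pn = Pn)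
    (hPnsa : ∀ p p' : P, ⟪Pn p, p'⟫ = ⟪p, Pn p'⟫)
    (X : ℝ → Fin m → ℝ) (mt : ℝ → P) (mtdot : ℝ → P) (v d : ℝ → Fin q → ℝ) (t : ℝ)
    (hX : HasDerivAt X (A.mulVec (X t) + Bm.mulVec ((G t) (Pn (mt t)) + v t + d t)) t)
    (hmt : HasDerivAt mt (mtdot t) t)
    -- the update law `μ̃' = −((𝓗X)Πⁿ)* Bᵀ𝓟X`, characterized via the adjoint identity
    (hupdate : ∀ p : P,
      ⟪mtdot t, p⟫ = -((Bm.transpose.mulVec (Pm.mulVec (X t))) ⬝ᵥ (G t) (Pn p))) :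
    HasDerivAt (fun s => (1 / 2) * (X s ⬝ᵥ Pm.mulVec (X s)) + (1 / 2) * ⟪mt s, mt s⟫)
      (-(1 / 2) * (X t ⬝ᵥ Q.mulVec (X t)) +
        (X t ⬝ᵥ Pm.mulVec (Bm.mulVec (v t + d t)))) t :=
  stmt15_general A Pm Q Bm hPsymm hLyap G Pn X mt mtdot v d t hX hmt hupdate
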